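/- arXiv:1811.04216 — 4 statements merged into one kernel-verified Lean document; each statement's English description precedes it below -/
import Mathlib

section
/- Let N ≥ 1 and h ≥ 1 be integers and p ∈ (0, 1] a real number. Let Θ₁, …, Θ_N be independent, identically distributed random variables, each geometric with parameter p, i.e., taking values in the positive integers with P(Θᵢ = x) = (1−p)^{x−1}·p for every integer x ≥ 1. For a subset S ⊆ {1, …, N}, define the expected idle time E[I_S] = E[max(h − Σ_{i∈S} Θᵢ, 0)]. Then (h − E[I_{{1}}])/1 ≥ (h − E[I_{{1,2}}])/2 ≥ ⋯ ≥ (h − E[I_{{1,…,N}}])/N; that is, the map k ↦ (h − E[I_{{1,…,k}}])/k is nonincreasing for k ∈ {1, …, N}. -/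
open MeasureTheory ProbabilityTheory Finset

/-! Put `F S = E[min (∑_{i ∈ S} Θᵢ, h)] = h - E[I_S]`. For a concave `φ` on `[0, ∞)` with
`φ 0 ≥ 0`, such as `min (·, h)`, and nonnegative reals `xᵢ` indexed by a set `T` of size `k + 1`,
`k φ (∑_T x) ≤ ∑_{j ∈ T} φ (∑_{T \ {j}} x)`. The `Θᵢ` are i.i.d., so each sum over `T \ {j}` has
the law of the sum over `{1, …, k}`; taking expectations gives `k F(T) ≤ (k + 1) F({1, …, k})`. -/

lemma ConcaveOn.mul_apply_le_mul_apply {φ : ℝ → ℝ} (hφ : ConcaveOn ℝ (Set.Ici 0) φ)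
    (hφ0 : 0 ≤ φ 0) {y s : ℝ} (hy : 0 ≤ y) (hys : y ≤ s) : y * φ s ≤ s * φ y := by
  rcases hys.lt_or_eq with hlt | rfl
  · have hs : 0 < s := hy.trans_lt hlt
    have ht : 0 ≤ 1 - y / s := by rw [sub_nonneg, div_le_one hs]; exact hlt.le
    have hchord : (1 - y / s) * φ 0 + y / s * φ s ≤ φ y := by
      simpa [div_mul_cancel₀ y hs.ne'] using
        hφ.2 Set.self_mem_Ici hs.le ht (div_nonneg hy hs.le) (by ring)
    have hφ0' : 0 ≤ (1 - y / s) * φ 0 := mul_nonneg ht hφ0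
    calc y * φ s = s * (y / s * φ s) := by field_simp
      _ ≤ s * φ y := by gcongr; linarith
  · exact le_rfl

lemma ConcaveOn.card_sub_one_mul_le_sum_erase {ι : Type*} [DecidableEq ι] {φ : ℝ → ℝ}
    (hφ : ConcaveOn ℝ (Set.Ici 0) φ) (hφ0 : 0 ≤ φ 0) (T : Finset ι) {x : ι → ℝ}
    (hx : ∀ i ∈ T, 0 ≤ x i) :
    ((#T : ℝ) - 1) * φ (∑ i ∈ T, x i) ≤ ∑ j ∈ T, φ (∑ i ∈ T.erase j, x i) := by
  set s := ∑ i ∈ T, x i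
  have herase : ∀ j ∈ T, ∑ i ∈ T.erase j, x i = s - x j := fun j hj => sum_erase_eq_sub hj
  rw [sum_congr rfl fun j hj => congrArg φ (herase j hj)]
  rcases (sum_nonneg hx : 0 ≤ s).lt_or_eq with hs | hs
  -- the weights `s - x j` add up to `(#T - 1) s`, and `(s - x j) φ s ≤ s φ (s - x j)`
  · refine le_of_mul_le_mul_left ?_ hs
    calc s * (((#T : ℝ) - 1) * φ s) = ∑ j ∈ T, (s - x j) * φ s := by
          rw [← sum_mul, sum_sub_distrib, sum_const, nsmul_eq_mul]; ring
      _ ≤ ∑ j ∈ T, s * φ (s - x j) := sum_le_sum fun j hj =>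
          hφ.mul_apply_le_mul_apply hφ0 (sub_nonneg.2 (single_le_sum hx hj))
            (by linarith [hx j hj])
      _ = s * ∑ j ∈ T, φ (s - x j) := (mul_sum _ _ _).symm
  · have hx0 : ∀ i ∈ T, x i = 0 := (sum_eq_zero_iff_of_nonneg hx).1 hs.symm
    have hs0 : s = 0 := hs.symm
    rw [sum_congr rfl fun j hj => by rw [hs0, hx0 j hj, sub_zero], sum_const, nsmul_eq_mul, hs0]
    linarith

namespace ProbabilityTheory.iIndepFun

variable {Ω ι : Type*} [MeasurableSpace Ω] {μ : Measure Ω} {X : ι → Ω → ℝ} {ν : Measure ℝ}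

lemma map_comp_eq_pi {κ : Type*} [Fintype κ] (hX : ∀ i, Measurable (X i))
    (hind : iIndepFun X μ) (hν : ∀ i, μ.map (X i) = ν) {σ : κ → ι} (hσ : σ.Injective) :
    μ.map (fun ω j => X (σ j) ω) = Measure.pi fun _ => ν := by
  rw [(hind.precomp hσ).map_fun_eq_pi_map fun j => (hX (σ j)).aemeasurable]
  simp only [hν]

lemma integral_comp_sum_eq_pi (hX : ∀ i, Measurable (X i))
    (hind : iIndepFun X μ) (hν : ∀ i, μ.map (X i) = ν) {g : ℝ → ℝ} (hg : Measurable g)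
    {A : Finset ι} {m : ℕ} (hA : #A = m) :
    ∫ ω, g (∑ i ∈ A, X i ω) ∂μ = ∫ x, g (∑ j, x j) ∂(Measure.pi fun _ : Fin m => ν) := by
  set e := (A.equivFinOfCardEq hA).symm
  have hsum : ∀ ω, ∑ i ∈ A, X i ω = ∑ j, X (e j) ω := fun ω => by
    rw [← sum_coe_sort, e.sum_comp (fun i : A => X i ω)]
  simp_rw [hsum]
  rw [← hind.map_comp_eq_pi hX hν (Subtype.val_injective.comp e.injective),
    integral_map (by fun_prop) (f := fun x : Fin m → ℝ => g (∑ j, x j))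
      (hg.comp (by fun_prop)).aestronglyMeasurable]
  rfl

lemma integral_comp_sum_eq_of_card_eq (hX : ∀ i, Measurable (X i))
    (hind : iIndepFun X μ) (hν : ∀ i, μ.map (X i) = ν) {g : ℝ → ℝ} (hg : Measurable g)
    {A B : Finset ι} (hAB : #A = #B) :
    ∫ ω, g (∑ i ∈ A, X i ω) ∂μ = ∫ ω, g (∑ i ∈ B, X i ω) ∂μ := by
  rw [hind.integral_comp_sum_eq_pi hX hν hg hAB, hind.integral_comp_sum_eq_pi hX hν hg rfl]

lemma card_mul_integral_comp_sum_le [DecidableEq ι] (hX : ∀ i, Measurable (X i))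
    (hX0 : ∀ i ω, 0 ≤ X i ω) (hind : iIndepFun X μ) (hν : ∀ i, μ.map (X i) = ν)
    {φ : ℝ → ℝ} (hφ : ConcaveOn ℝ (Set.Ici 0) φ) (hφ0 : 0 ≤ φ 0) (hφm : Measurable φ)
    (hint : ∀ S : Finset ι, Integrable (fun ω => φ (∑ i ∈ S, X i ω)) μ)
    {A T : Finset ι} (hAT : #T = #A + 1) :
    #A * ∫ ω, φ (∑ i ∈ T, X i ω) ∂μ ≤ #T * ∫ ω, φ (∑ i ∈ A, X i ω) ∂μ := by
  have hcard : (#A : ℝ) = #T - 1 := by rw [hAT]; push_cast; ring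
  calc (#A : ℝ) * ∫ ω, φ (∑ i ∈ T, X i ω) ∂μ
      = ∫ ω, (#T - 1) * φ (∑ i ∈ T, X i ω) ∂μ := by rw [hcard, integral_const_mul]
    _ ≤ ∫ ω, ∑ j ∈ T, φ (∑ i ∈ T.erase j, X i ω) ∂μ :=
        integral_mono ((hint T).const_mul _) (integrable_finsetSum T fun j _ => hint _)
          fun ω => hφ.card_sub_one_mul_le_sum_erase hφ0 T fun i _ => hX0 i ω
    _ = ∑ j ∈ T, ∫ ω, φ (∑ i ∈ T.erase j, X i ω) ∂μ := integral_finsetSum T fun j _ => hint _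
    _ = ∑ j ∈ T, ∫ ω, φ (∑ i ∈ A, X i ω) ∂μ := sum_congr rfl fun j hj =>
        hind.integral_comp_sum_eq_of_card_eq hX hν hφm (by rw [card_erase_of_mem hj, hAT]; rfl)
    _ = #T * ∫ ω, φ (∑ i ∈ A, X i ω) ∂μ := by rw [sum_const, nsmul_eq_mul]

end ProbabilityTheory.iIndepFun

lemma map_eq_map_of_measure_eq_of_one_le {Ω : Type*} [MeasurableSpace Ω] {μ : Measure Ω}
    {Y Z : Ω → ℕ} (hY : Measurable Y) (hZ : Measurable Z) (hY1 : ∀ᵐ ω ∂μ, 1 ≤ Y ω)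
    (hZ1 : ∀ᵐ ω ∂μ, 1 ≤ Z ω) (hYZ : ∀ x, 1 ≤ x → μ {ω | Y ω = x} = μ {ω | Z ω = x}) :
    μ.map Y = μ.map Z := by
  have hzero {W : Ω → ℕ} (hW : ∀ᵐ ω ∂μ, 1 ≤ W ω) : μ (W ⁻¹' {0}) = 0 :=
    measure_mono_null (fun ω (hω : W ω = 0) => by simp [hω]) (ae_iff.1 hW)
  refine Measure.ext_of_singleton fun x => ?_
  rw [Measure.map_apply hY (measurableSet_singleton x),
    Measure.map_apply hZ (measurableSet_singleton x)]
  rcases Nat.eq_zero_or_pos x with rfl | hx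
  · rw [hzero hY1, hzero hZ1]
  · exact hYZ x hx

lemma integral_min_eq_sub_integral_max_sub {Ω : Type*} [MeasurableSpace Ω] {μ : Measure Ω}
    [IsProbabilityMeasure μ] {f : Ω → ℝ} (c : ℝ) (hf : Integrable (fun ω => min (f ω) c) μ) :
    ∫ ω, min (f ω) c ∂μ = c - ∫ ω, max (c - f ω) 0 ∂μ := by
  have hmax (ω : Ω) : max (c - f ω) 0 = c - min (f ω) c := by rw [← max_sub_sub_left, sub_self]
  simp_rw [hmax]
  rw [integral_sub (integrable_const c) hf, integral_const]
  simp

theorem stmt4_general {Ω : Type*} [MeasurableSpace Ω] (μ : Measure Ω) [IsProbabilityMeasure μ]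
    (N h : ℕ) (p : ℝ)
    (Θ : Fin N → Ω → ℕ) (hmeas : ∀ i, Measurable (Θ i))
    (hindep : iIndepFun Θ μ)
    (hpos : ∀ i, ∀ᵐ ω ∂μ, 1 ≤ Θ i ω)
    (hgeom : ∀ i, ∀ x : ℕ, 1 ≤ x →
      μ {ω | Θ i ω = x} = ENNReal.ofReal ((1 - p) ^ (x - 1) * p))
    (k : ℕ) (hk1 : 1 ≤ k) (hkN : k + 1 ≤ N) :
    ((h : ℝ) - ∫ ω, max ((h : ℝ) -
        ∑ i ∈ Finset.univ.filter (fun i : Fin N => (i : ℕ) < k + 1), (Θ i ω : ℝ)) 0 ∂μ)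
        / (k + 1 : ℝ)
      ≤ ((h : ℝ) - ∫ ω, max ((h : ℝ) -
        ∑ i ∈ Finset.univ.filter (fun i : Fin N => (i : ℕ) < k), (Θ i ω : ℝ)) 0 ∂μ)
        / (k : ℝ) := by
  set X : Fin N → Ω → ℝ := fun i ω => Θ i ω
  have hX (i : Fin N) : Measurable (X i) := measurable_from_top.comp (hmeas i)
  have hν (i : Fin N) : μ.map (X i) = μ.map (X ⟨0, by omega⟩) := by
    change μ.map (((↑) : ℕ → ℝ) ∘ Θ i) = μ.map (((↑) : ℕ → ℝ) ∘ Θ _)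
    rw [← Measure.map_map measurable_from_top (hmeas i),
      ← Measure.map_map measurable_from_top (hmeas _),
      map_eq_map_of_measure_eq_of_one_le (hmeas i) (hmeas _) (hpos i) (hpos _)
        fun x hx => (hgeom i x hx).trans (hgeom _ x hx).symm]
  have hint (S : Finset (Fin N)) : Integrable (fun ω => min (∑ i ∈ S, X i ω) h) μ := by
    refine Integrable.of_bound (by fun_prop) h (Filter.Eventually.of_forall fun ω => ?_)
    rw [Real.norm_of_nonneg (le_min (sum_nonneg fun i _ => Nat.cast_nonneg _) h.cast_nonneg)]
    exact min_le_right _ _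
  set A := univ.filter fun i : Fin N => (i : ℕ) < k
  set T := univ.filter fun i : Fin N => (i : ℕ) < k + 1
  have hA : #A = k := by rw [Fin.card_filter_val_lt]; omega
  have hT : #T = k + 1 := by rw [Fin.card_filter_val_lt]; omega
  have hXind : iIndepFun X μ := hindep.comp (fun _ => ((↑) : ℕ → ℝ)) fun _ => measurable_from_top
  have hmin : ConcaveOn ℝ (Set.Ici 0) fun s : ℝ => min s h :=
    (concaveOn_id (convex_Ici 0)).inf (concaveOn_const _ (convex_Ici 0))
  have key := hXind.card_mul_integral_comp_sum_le hX (fun i ω => Nat.cast_nonneg _) hν hmin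
    (le_min le_rfl h.cast_nonneg) (by fun_prop) hint (A := A) (T := T) (by rw [hA, hT])
  rw [hA, hT] at key
  rw [← integral_min_eq_sub_integral_max_sub _ (hint T),
    ← integral_min_eq_sub_integral_max_sub _ (hint A),
    div_le_div_iff₀ (by positivity) (by exact_mod_cast hk1)]
  push_cast at key
  linarith

/-- Theorem 3, symmetric-structure case. Let `Θ 1, …, Θ N` be i.i.d. geometric
random variables with parameter `p ∈ (0, 1]` (values in the positive integers, with
`P(Θ i = x) = (1−p)^{x−1} p` for `x ≥ 1`). For `S ⊆ {1,…,N}` let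
`E[I_S] = E[max (h − Σ_{i∈S} Θ i) 0]`. Then the map `k ↦ (h − E[I_{{1,…,k}}]) / k` is
nonincreasing for `k ∈ {1, …, N}`. -/
theorem stmt4 {Ω : Type*} [MeasurableSpace Ω] (μ : Measure Ω) [IsProbabilityMeasure μ]
    (N h : ℕ) (hN : 1 ≤ N) (hh : 1 ≤ h) (p : ℝ) (hp : p ∈ Set.Ioc (0 : ℝ) 1)
    (Θ : Fin N → Ω → ℕ) (hmeas : ∀ i, Measurable (Θ i))
    (hindep : iIndepFun Θ μ)
    (hpos : ∀ i, ∀ᵐ ω ∂μ, 1 ≤ Θ i ω)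
    (hgeom : ∀ i, ∀ x : ℕ, 1 ≤ x →
      μ {ω | Θ i ω = x} = ENNReal.ofReal ((1 - p) ^ (x - 1) * p))
    (k : ℕ) (hk1 : 1 ≤ k) (hkN : k + 1 ≤ N) :
    ((h : ℝ) - ∫ ω, max ((h : ℝ) -
        ∑ i ∈ Finset.univ.filter (fun i : Fin N => (i : ℕ) < k + 1), (Θ i ω : ℝ)) 0 ∂μ)
        / (k + 1 : ℝ)
      ≤ ((h : ℝ) - ∫ ω, max ((h : ℝ) -
        ∑ i ∈ Finset.univ.filter (fun i : Fin N => (i : ℕ) < k), (Θ i ω : ℝ)) 0 ∂μ)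
        / (k : ℝ) :=
  stmt4_general μ N h p Θ hmeas hindep hpos hgeom k hk1 hkN
end

section
/- Let h ≥ 1 be an integer and p, p' ∈ (0, 1] real numbers with p ≤ p'. Let Θ be a random variable with P(Θ = x) = (1−p)^{x−1}·p for integers x ≥ 1 and Θ' a random variable with P(Θ' = x) = (1−p')^{x−1}·p' for integers x ≥ 1, and let Y be an integer-valued random variable with 1 ≤ Y ≤ h almost surely, defined on the same probability space, independent of Θ and independent of Θ'. Then p · E[min(Θ + Y, h) − Y] ≤ p' · E[min(Θ' + Y, h) − Y]. -/
/-!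
Splitting according to the value `k` of `Y`, one has `min(Θ + Y, h) - Y = min(Θ, h - k)
= ∑_{j < h - k} 1[j < Θ]`. Independence and the geometric tail `P(Θ > j) = (1 - p)^j` then give
`p · E[min(Θ + Y, h) - Y] = ∑_k P(Y = k) (1 - (1 - p)^(h - k))`, and every term of this sum is
nondecreasing in `p`.
-/

open MeasureTheory ProbabilityTheory Finset

lemma min_eq_sum_range_ite_lt (t m : ℕ) :
    (min t m : ℝ) = ∑ j ∈ range m, if j < t then 1 else 0 := by
  rw [sum_boole]
  have : {j ∈ range m | j < t} = range (min t m) := by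
    ext j; simp only [mem_filter, mem_range]; omega
  simp [this]

lemma min_add_sub_eq_sum (h t : ℕ) {y : ℤ} (hy0 : 0 ≤ y) (hyh : y ≤ h) :
    ((min ((t : ℤ) + y) h : ℤ) : ℝ) - y =
      ∑ k ∈ range (h + 1), ∑ j ∈ range (h - k), if y = k ∧ j < t then 1 else 0 := by
  lift y to ℕ using hy0
  have hyh : y ≤ h := by exact_mod_cast hyh
  rw [sum_eq_single_of_mem y (mem_range.2 (by omega)) fun k _ hk => by
    simp [Ne.symm hk]]
  simp only [true_and, ← min_eq_sum_range_ite_lt]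
  have : min ((t : ℤ) + y) h - y = (min t (h - y) : ℕ) := by omega
  exact_mod_cast this

section

variable {Ω : Type*} [MeasurableSpace Ω] {μ : Measure Ω}

lemma measureReal_lt_eq_pow [IsProbabilityMeasure μ] {p : ℝ} (hp0 : 0 ≤ p) (hp1 : p ≤ 1)
    {Θ : Ω → ℕ} (hΘ : Measurable Θ) (hΘpos : ∀ᵐ ω ∂μ, 1 ≤ Θ ω)
    (hgeom : ∀ x : ℕ, 1 ≤ x → μ {ω | Θ ω = x} = ENNReal.ofReal ((1 - p) ^ (x - 1) * p))
    (j : ℕ) : μ.real {ω | j < Θ ω} = (1 - p) ^ j := by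
  induction j with
  | zero =>
    have : μ {ω | 0 < Θ ω} = 1 := (mem_ae_iff_prob_eq_one (hΘ measurableSet_Ioi)).1 hΘpos
    simp [measureReal_def, this]
  | succ j ih =>
    have hsplit : {ω | j < Θ ω} = {ω | Θ ω = j + 1} ∪ {ω | j + 1 < Θ ω} := by
      ext ω; simp only [Set.mem_ofPred_eq, Set.mem_union]; omega
    have hdisj : Disjoint {ω | Θ ω = j + 1} {ω | j + 1 < Θ ω} :=
      Set.disjoint_left.2 fun ω h₁ h₂ => by simp_all
    have hpoint : μ.real {ω | Θ ω = j + 1} = (1 - p) ^ j * p := by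
      rw [measureReal_def, hgeom (j + 1) le_add_self, Nat.add_sub_cancel,
        ENNReal.toReal_ofReal (mul_nonneg (pow_nonneg (sub_nonneg.2 hp1) _) hp0)]
    rw [hsplit, measureReal_union hdisj (hΘ measurableSet_Ioi), hpoint] at ih
    rw [pow_succ]
    linarith

lemma mul_integral_min_add_sub_eq_sum [IsProbabilityMeasure μ] (h : ℕ) {p : ℝ} (hp0 : 0 ≤ p)
    (hp1 : p ≤ 1) {Θ : Ω → ℕ} (hΘ : Measurable Θ) (hΘpos : ∀ᵐ ω ∂μ, 1 ≤ Θ ω)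
    (hgeom : ∀ x : ℕ, 1 ≤ x → μ {ω | Θ ω = x} = ENNReal.ofReal ((1 - p) ^ (x - 1) * p))
    {Y : Ω → ℤ} (hYmeas : Measurable Y) (hY : ∀ᵐ ω ∂μ, 0 ≤ Y ω ∧ Y ω ≤ h)
    (hindep : IndepFun Θ Y μ) :
    p * ∫ ω, (((min ((Θ ω : ℤ) + Y ω) (h : ℤ) : ℤ) : ℝ) - (Y ω : ℝ)) ∂μ =
      ∑ k ∈ range (h + 1), μ.real {ω | Y ω = k} * (1 - (1 - p) ^ (h - k)) := by
  set A : ℕ → ℕ → Set Ω := fun k j => {ω | Y ω = k} ∩ {ω | j < Θ ω}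
  have hA : ∀ k j, MeasurableSet (A k j) := fun k j =>
    (hYmeas (measurableSet_singleton _)).inter (hΘ measurableSet_Ioi)
  have hAreal : ∀ k j, μ.real (A k j) = μ.real {ω | Y ω = k} * (1 - p) ^ j := fun k j => by
    rw [← measureReal_lt_eq_pow hp0 hp1 hΘ hΘpos hgeom j, mul_comm]
    simp only [measureReal_def, ← ENNReal.toReal_mul]
    exact congrArg ENNReal.toReal <| (congrArg μ (Set.inter_comm _ _)).trans <|
      hindep.measure_inter_preimage_eq_mul _ _ measurableSet_Ioi (measurableSet_singleton _)
  have hae : (fun ω => (((min ((Θ ω : ℤ) + Y ω) (h : ℤ) : ℤ) : ℝ) - (Y ω : ℝ))) =ᵐ[μ]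
      fun ω => ∑ k ∈ range (h + 1), ∑ j ∈ range (h - k), (A k j).indicator 1 ω := by
    filter_upwards [hY] with ω hω
    rw [min_add_sub_eq_sum h (Θ ω) hω.1 hω.2]
    simp only [A, Set.indicator_apply, Set.mem_inter_iff, Set.mem_ofPred_eq, Pi.one_apply]
  have hint : ∀ k j, Integrable ((A k j).indicator (1 : Ω → ℝ)) μ := fun k j =>
    (integrable_const 1).indicator (hA k j)
  rw [integral_congr_ae hae, integral_finsetSum _ fun k _ => integrable_finsetSum _ fun j _ =>
    hint k j, mul_sum]
  refine sum_congr rfl fun k _ => ?_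
  rw [integral_finsetSum _ fun j _ => hint k j, ← mul_neg_geom_sum]
  simp only [integral_indicator_one (hA k _), hAreal, ← mul_sum]
  ring

end

theorem stmt9_general {Ω : Type*} [MeasurableSpace Ω] (μ : Measure Ω) [IsProbabilityMeasure μ]
    (h : ℕ) (p p' : ℝ)
    (hp : p ∈ Set.Ioc (0 : ℝ) 1) (hp' : p' ∈ Set.Ioc (0 : ℝ) 1) (hpp' : p ≤ p')
    (Θ Θ' : Ω → ℕ) (hΘmeas : Measurable Θ) (hΘ'meas : Measurable Θ')
    (hΘpos : ∀ᵐ ω ∂μ, 1 ≤ Θ ω) (hΘ'pos : ∀ᵐ ω ∂μ, 1 ≤ Θ' ω)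
    (hgeom : ∀ x : ℕ, 1 ≤ x → μ {ω | Θ ω = x} = ENNReal.ofReal ((1 - p) ^ (x - 1) * p))
    (hgeom' : ∀ x : ℕ, 1 ≤ x → μ {ω | Θ' ω = x} = ENNReal.ofReal ((1 - p') ^ (x - 1) * p'))
    (Y : Ω → ℤ) (hYmeas : Measurable Y)
    (hY : ∀ᵐ ω ∂μ, 1 ≤ Y ω ∧ Y ω ≤ (h : ℤ))
    (hindep : IndepFun Θ Y μ) (hindep' : IndepFun Θ' Y μ) :
    p * ∫ ω, (((min ((Θ ω : ℤ) + Y ω) (h : ℤ) : ℤ) : ℝ) - (Y ω : ℝ)) ∂μ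
      ≤ p' * ∫ ω, (((min ((Θ' ω : ℤ) + Y ω) (h : ℤ) : ℤ) : ℝ) - (Y ω : ℝ)) ∂μ := by
  have hY₀ : ∀ᵐ ω ∂μ, 0 ≤ Y ω ∧ Y ω ≤ h := hY.mono fun ω hω => ⟨by omega, hω.2⟩
  rw [mul_integral_min_add_sub_eq_sum h hp.1.le hp.2 hΘmeas hΘpos hgeom hYmeas hY₀ hindep,
    mul_integral_min_add_sub_eq_sum h hp'.1.le hp'.2 hΘ'meas hΘ'pos hgeom' hYmeas hY₀ hindep']
  gcongr
  linarith [hp'.2]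

/-- Lemma 1: monotonicity of `p ↦ p · E[X_{{1}∪S} − X_S]` in the channel
quality. Let `Θ` and `Θ'` be geometric random variables with parameters `p ≤ p'` in `(0,1]`,
and `Y` an integer-valued random variable with `1 ≤ Y ≤ h` a.s., independent of `Θ` and of
`Θ'`. Then `p · E[min(Θ + Y, h) − Y] ≤ p' · E[min(Θ' + Y, h) − Y]`. -/
theorem stmt9 {Ω : Type*} [MeasurableSpace Ω] (μ : Measure Ω) [IsProbabilityMeasure μ]
    (h : ℕ) (hh : 1 ≤ h) (p p' : ℝ)
    (hp : p ∈ Set.Ioc (0 : ℝ) 1) (hp' : p' ∈ Set.Ioc (0 : ℝ) 1) (hpp' : p ≤ p')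
    (Θ Θ' : Ω → ℕ) (hΘmeas : Measurable Θ) (hΘ'meas : Measurable Θ')
    (hΘpos : ∀ᵐ ω ∂μ, 1 ≤ Θ ω) (hΘ'pos : ∀ᵐ ω ∂μ, 1 ≤ Θ' ω)
    (hgeom : ∀ x : ℕ, 1 ≤ x → μ {ω | Θ ω = x} = ENNReal.ofReal ((1 - p) ^ (x - 1) * p))
    (hgeom' : ∀ x : ℕ, 1 ≤ x → μ {ω | Θ' ω = x} = ENNReal.ofReal ((1 - p') ^ (x - 1) * p'))
    (Y : Ω → ℤ) (hYmeas : Measurable Y)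
    (hY : ∀ᵐ ω ∂μ, 1 ≤ Y ω ∧ Y ω ≤ (h : ℤ))
    (hindep : IndepFun Θ Y μ) (hindep' : IndepFun Θ' Y μ) :
    p * ∫ ω, (((min ((Θ ω : ℤ) + Y ω) (h : ℤ) : ℤ) : ℝ) - (Y ω : ℝ)) ∂μ
      ≤ p' * ∫ ω, (((min ((Θ' ω : ℤ) + Y ω) (h : ℤ) : ℤ) : ℝ) - (Y ω : ℝ)) ∂μ :=
  stmt9_general μ h p p' hp hp' hpp' Θ Θ' hΘmeas hΘ'meas hΘpos hΘ'pos hgeom hgeom' Y hYmeas hY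
    hindep hindep'
end

section
/- Let N ≥ 1 and h be integers with h > N, and p ∈ (0, 1] a real number. Let Θ₁, …, Θ_N be independent, identically distributed random variables, each taking values in the positive integers with P(Θᵢ = x) = (1−p)^{x−1}·p for every integer x ≥ 1. Then P(Σ_{i=1}^N Θᵢ ≥ h) = Σ_{i=0}^{N−1} C(h, i)·(1−p)^{h−i}·pⁱ + C(h−1, h−N)·(1−p)^{h−N}·p^N, where C(n, k) denotes the binomial coefficient. -/
/-!
`S = ∑ Θᵢ` is the number of Bernoulli(`p`) trials up to the `N`-th success, so repeated
convolution with the geometric law gives the negative binomial law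
`P(S = k) = C(k-1, N-1) (1-p)^(k-N) p^N`. Moreover `S > k` means fewer than `N` successes in the
first `k` trials, i.e. `P(S > k) = ∑_{i<N} C(k,i) (1-p)^(k-i) p^i`; analytically this follows by
induction on `k` from Pascal's rule. The formula is `P(S ≥ h) = P(S > h) + P(S = h)`.
-/

open MeasureTheory ProbabilityTheory Finset

noncomputable def shiftedGeometricPMF (p : ℝ) : ℕ → ℝ
  | 0 => 0
  | x + 1 => (1 - p) ^ x * p

/-- Law of the number of trials up to the `m`-th success; the closed form needs no case `k < n`
since `Nat.choose` vanishes there. -/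
noncomputable def negBinomialPMF (p : ℝ) : ℕ → ℕ → ℝ
  | 0, k => if k = 0 then 1 else 0
  | _ + 1, 0 => 0
  | n + 1, k + 1 => (k.choose n : ℝ) * (1 - p) ^ (k - n) * p ^ (n + 1)

noncomputable def binomialProbLT (p : ℝ) (k N : ℕ) : ℝ :=
  ∑ i ∈ range N, (k.choose i : ℝ) * (1 - p) ^ (k - i) * p ^ i

lemma sum_range_choose_eq_choose_succ (l n : ℕ) :
    ∑ a ∈ range l, a.choose n = l.choose (n + 1) := by
  induction l with
  | zero => simp
  | succ l ih => rw [sum_range_succ, ih, Nat.choose_succ_succ', add_comm]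

lemma negBinomialPMF_succ (p : ℝ) (m k : ℕ) :
    negBinomialPMF p (m + 1) k
      = ∑ a ∈ range (k + 1), negBinomialPMF p m a * shiftedGeometricPMF p (k - a) := by
  rcases m with _ | n
  · rw [sum_eq_single 0 (fun a _ ha => by simp [negBinomialPMF, ha]) (by simp)]
    cases k <;> simp [negBinomialPMF, shiftedGeometricPMF]
  rcases k with _ | l
  · simp [negBinomialPMF]
  rw [sum_range_succ', sum_range_succ]
  have hterm : ∀ a ∈ range l,
      negBinomialPMF p (n + 1) (a + 1) * shiftedGeometricPMF p (l + 1 - (a + 1))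
        = (a.choose n : ℝ) * ((1 - p) ^ (l - (n + 1)) * p ^ (n + 2)) := by
    intro a ha
    obtain ⟨j, hj⟩ : ∃ j, l + 1 - (a + 1) = j + 1 := ⟨l - a - 1, by grind⟩
    rw [hj, negBinomialPMF, shiftedGeometricPMF]
    rcases lt_or_ge a n with han | han
    · simp [Nat.choose_eq_zero_of_lt han]
    · rw [show l - (n + 1) = (a - n) + j by omega, pow_add]
      ring
  rw [sum_congr rfl hterm, ← sum_mul, ← Nat.cast_sum, sum_range_choose_eq_choose_succ]
  simp only [negBinomialPMF, shiftedGeometricPMF, tsub_self, mul_zero, add_zero, tsub_zero,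
    zero_mul]
  ring

lemma choose_succ_succ_mul_pow_mul_pow {R : Type*} [CommSemiring R] (x y : R) (k i : ℕ) :
    ((k + 1).choose (i + 1) : R) * x ^ (k + 1 - (i + 1)) * y ^ (i + 1)
      = x * ((k.choose (i + 1) : R) * x ^ (k - (i + 1)) * y ^ (i + 1))
        + y * ((k.choose i : R) * x ^ (k - i) * y ^ i) := by
  rcases lt_or_ge i k with hik | hki
  · obtain ⟨j, rfl⟩ : ∃ j, k = i + 1 + j := ⟨k - (i + 1), by omega⟩
    simp only [Nat.choose_succ_succ', Nat.add_sub_add_right, Nat.add_sub_cancel_left,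
      show i + 1 + j - i = j + 1 by omega]
    push_cast
    ring
  · rw [Nat.choose_succ_succ', Nat.choose_eq_zero_of_lt (by omega : k < i + 1),
      Nat.sub_eq_zero_of_le hki, Nat.sub_eq_zero_of_le (by omega : k + 1 ≤ i + 1)]
    push_cast
    ring

lemma binomialProbLT_succ (p : ℝ) (k n : ℕ) :
    binomialProbLT p (k + 1) (n + 1)
      = binomialProbLT p k (n + 1) - negBinomialPMF p (n + 1) (k + 1) := by
  have hpascal : binomialProbLT p (k + 1) (n + 1)
      = (1 - p) * binomialProbLT p k (n + 1) + p * binomialProbLT p k n := by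
    simp only [binomialProbLT, sum_range_succ' _ n, choose_succ_succ_mul_pow_mul_pow,
      sum_add_distrib, ← mul_sum]
    simp only [Nat.choose_zero_right, Nat.cast_one, tsub_zero, one_mul, pow_zero, mul_one]
    ring
  have hlast : binomialProbLT p k (n + 1)
      = binomialProbLT p k n + (k.choose n : ℝ) * (1 - p) ^ (k - n) * p ^ n :=
    sum_range_succ _ n
  rw [hpascal, hlast, negBinomialPMF]
  ring

lemma one_sub_sum_negBinomialPMF (p : ℝ) (k n : ℕ) :
    1 - ∑ j ∈ range (k + 1), negBinomialPMF p (n + 1) j = binomialProbLT p k (n + 1) := by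
  induction k with
  | zero => simp [negBinomialPMF, binomialProbLT, sum_range_succ' _ n]
  | succ k ih => rw [sum_range_succ, binomialProbLT_succ, ← ih]; ring

section
variable {Ω : Type*} [MeasurableSpace Ω] {μ : Measure Ω}

lemma measureReal_add_eq_sum [IsFiniteMeasure μ] {X Y : Ω → ℕ} (hX : Measurable X)
    (hY : Measurable Y) (hXY : IndepFun X Y μ) (k : ℕ) :
    μ.real {ω | X ω + Y ω = k}
      = ∑ a ∈ range (k + 1), μ.real {ω | X ω = a} * μ.real {ω | Y ω = k - a} := by
  have hpair : {ω | X ω + Y ω = k} = (fun ω => (X ω, Y ω)) ⁻¹' ↑(antidiagonal k) := by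
    ext ω; simp
  rw [hpair, ← sum_measureReal_preimage_singleton _
    (fun _ _ => (hX.prodMk hY) (measurableSet_singleton _)),
    ← Nat.sum_antidiagonal_eq_sum_range_succ
      (fun a b => μ.real {ω | X ω = a} * μ.real {ω | Y ω = b})]
  refine sum_congr rfl fun ab _ => ?_
  have hinter := hXY.measure_inter_preimage_eq_mul {ab.1} {ab.2}
      (measurableSet_singleton _) (measurableSet_singleton _)
  have hfiber : (fun ω => (X ω, Y ω)) ⁻¹' {ab} = X ⁻¹' {ab.1} ∩ Y ⁻¹' {ab.2} := by
    ext ω; simp [Prod.ext_iff]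
  rw [measureReal_def, hfiber, hinter, ENNReal.toReal_mul]
  rfl

lemma measureReal_le_eq_one_sub_sum [IsProbabilityMeasure μ] {S : Ω → ℕ} (hS : Measurable S)
    (k : ℕ) :
    μ.real {ω | k ≤ S ω} = 1 - ∑ j ∈ range k, μ.real {ω | S ω = j} := by
  have hcompl : {ω | k ≤ S ω} = (S ⁻¹' ↑(range k))ᶜ := by
    ext ω; simp
  rw [hcompl, probReal_compl_eq_one_sub (hS (Finset.measurableSet _)),
    ← sum_measureReal_preimage_singleton _ (fun _ _ => hS (measurableSet_singleton _))]
  rfl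

lemma measureReal_sum_eq_negBinomialPMF [IsProbabilityMeasure μ] {ι : Type*} {Θ : ι → Ω → ℕ}
    {p : ℝ} (hmeas : ∀ i, Measurable (Θ i)) (hindep : iIndepFun Θ μ)
    (hgeom : ∀ i x, μ.real {ω | Θ i ω = x} = shiftedGeometricPMF p x) (s : Finset ι) (k : ℕ) :
    μ.real {ω | ∑ i ∈ s, Θ i ω = k} = negBinomialPMF p s.card k := by
  classical
  induction s using Finset.induction_on generalizing k with
  | empty => rcases k with _ | k <;> simp [negBinomialPMF, eq_comm]
  | @insert i s hi ih =>
    have hindep' : IndepFun (fun ω => ∑ j ∈ s, Θ j ω) (Θ i) μ := by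
      simpa [Finset.sum_fn] using hindep.indepFun_finsetSum_of_notMem hmeas hi
    simp only [sum_insert hi, add_comm (Θ i _), card_insert_of_notMem hi, negBinomialPMF_succ]
    rw [measureReal_add_eq_sum (by fun_prop) (hmeas i) hindep']
    simp only [ih, hgeom]

end

/-- formula for `P(X = h)` in the symmetric-structure case. Let
`Θ 1, …, Θ N` be i.i.d. geometric random variables with parameter `p ∈ (0,1]` and `h > N`.
Then `P(Σ_{i=1}^N Θ i ≥ h) = Σ_{i=0}^{N−1} C(h,i) (1−p)^{h−i} pⁱ
+ C(h−1, h−N) (1−p)^{h−N} p^N`. -/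
theorem stmt14 {Ω : Type*} [MeasurableSpace Ω] (μ : Measure Ω) [IsProbabilityMeasure μ]
    (N h : ℕ) (hN : 1 ≤ N) (hh : N < h) (p : ℝ) (hp : p ∈ Set.Ioc (0 : ℝ) 1)
    (Θ : Fin N → Ω → ℕ) (hmeas : ∀ i, Measurable (Θ i))
    (hindep : iIndepFun Θ μ)
    (hpos : ∀ i, ∀ᵐ ω ∂μ, 1 ≤ Θ i ω)
    (hgeom : ∀ i, ∀ x : ℕ, 1 ≤ x →
      μ {ω | Θ i ω = x} = ENNReal.ofReal ((1 - p) ^ (x - 1) * p)) :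
    (μ {ω | h ≤ ∑ i, Θ i ω}).toReal
      = ∑ i ∈ Finset.range N, (h.choose i : ℝ) * (1 - p) ^ (h - i) * p ^ i
        + ((h - 1).choose (h - N) : ℝ) * (1 - p) ^ (h - N) * p ^ N := by
  obtain ⟨n, rfl⟩ : ∃ n, N = n + 1 := ⟨N - 1, by omega⟩
  obtain ⟨k, rfl⟩ : ∃ k, h = k + 1 := ⟨h - 1, by omega⟩
  have hpmf : ∀ i x, μ.real {ω | Θ i ω = x} = shiftedGeometricPMF p x := by
    rintro i (_ | x)
    · have hnull := ae_iff.1 (hpos i)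
      simp only [not_le, Nat.lt_one_iff] at hnull
      simp [measureReal_def, hnull, shiftedGeometricPMF]
    · rw [measureReal_def, hgeom i (x + 1) (by omega),
        ENNReal.toReal_ofReal (mul_nonneg (pow_nonneg (sub_nonneg.2 hp.2) _) hp.1.le)]
      simp [shiftedGeometricPMF]
  have hsum : ∀ j, μ.real {ω | ∑ i, Θ i ω = j} = negBinomialPMF p (n + 1) j := by
    simpa using measureReal_sum_eq_negBinomialPMF hmeas hindep hpmf univ
  rw [← measureReal_def, measureReal_le_eq_one_sub_sum (by fun_prop),
    sum_congr rfl fun j _ => hsum j, one_sub_sum_negBinomialPMF]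
  calc binomialProbLT p k (n + 1)
      = binomialProbLT p (k + 1) (n + 1) + negBinomialPMF p (n + 1) (k + 1) := by
        rw [binomialProbLT_succ]; ring
    _ = _ := by simp [binomialProbLT, negBinomialPMF, Nat.choose_symm (by omega : n ≤ k)]
end

section
/- Let N ≥ 1 and h be integers with h > N, and p ∈ (0, 1] a real number. Let Θ₁, …, Θ_N be independent, identically distributed random variables, each taking values in the positive integers with P(Θᵢ = x) = (1−p)^{x−1}·p for every integer x ≥ 1, and set X = min(Σ_{i=1}^N Θᵢ, h). Then E[X] = N·p^N + Σ_{k=1}^{h−N−1} (N+k)·C(N+k−1, k)·(1−p)^k·p^N + h·( Σ_{i=0}^{N−1} C(h, i)·(1−p)^{h−i}·pⁱ + C(h−1, h−N)·(1−p)^{h−N}·p^N ), where C(n, k) denotes the binomial coefficient. -/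
/-!
The sum `S = Θ₁ + ⋯ + Θ_N` is negative binomial, `P(S = m) = C(m-1, m-N) (1-p)^(m-N) p^N` for
`m ≥ N`: independence turns the law of a sum into a convolution, and adding one geometric summand
to a negative binomial one is evaluated by the hockey-stick identity. Then
`E[min(S, h)] = Σ_{m<h} m P(S = m) + h (1 - P(S < h))`, and `1 - P(S < h) = P(S = h) + P(S > h)`,
where `S > h` means that fewer than `N` of the first `h` Bernoulli trials succeed; this is the
binomial sum in the formula.
-/

open MeasureTheory ProbabilityTheory Finset

/-- The probability that the `r`-th success of independent Bernoulli(`p`) trials occurs at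
trial `n`. -/
noncomputable def negBinomialPMFReal (r : ℕ) (p : ℝ) (n : ℕ) : ℝ :=
  if r ≤ n then ((n - 1).choose (n - r) : ℝ) * (1 - p) ^ (n - r) * p ^ r else 0

section PMF

variable (p : ℝ)

lemma negBinomialPMFReal_of_lt {r n : ℕ} (h : n < r) : negBinomialPMFReal r p n = 0 :=
  if_neg (not_le.2 h)

lemma negBinomialPMFReal_add (r k : ℕ) :
    negBinomialPMFReal r p (r + k) = r.multichoose k * (1 - p) ^ k * p ^ r := by
  simp [negBinomialPMFReal, Nat.multichoose_eq]

lemma negBinomialPMFReal_self (r : ℕ) : negBinomialPMFReal r p r = p ^ r := by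
  simpa using negBinomialPMFReal_add p r 0

lemma negBinomialPMFReal_zero_left (n : ℕ) :
    negBinomialPMFReal 0 p n = if n = 0 then 1 else 0 := by
  rw [← zero_add n, negBinomialPMFReal_add]
  cases n <;> simp

lemma negBinomialPMFReal_one_succ (n : ℕ) : negBinomialPMFReal 1 p (n + 1) = (1 - p) ^ n * p := by
  simpa [add_comm] using negBinomialPMFReal_add p 1 n

lemma sum_antidiagonal_negBinomialPMFReal_one_mul (c m : ℕ) :
    ∑ ij ∈ antidiagonal m, negBinomialPMFReal 1 p ij.1 * negBinomialPMFReal c p ij.2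
      = negBinomialPMFReal (c + 1) p m := by
  rw [← Nat.sum_antidiagonal_swap]
  simp only [Prod.fst_swap, Prod.snd_swap]
  rw [Nat.sum_antidiagonal_eq_sum_range_succ
    (fun b a => negBinomialPMFReal 1 p a * negBinomialPMFReal c p b)]
  rcases lt_or_ge m (c + 1) with hm | hm
  · rw [negBinomialPMFReal_of_lt p hm]
    refine sum_eq_zero fun k hk => ?_
    rcases lt_or_ge k c with hkc | hkc
    · rw [negBinomialPMFReal_of_lt p hkc, mul_zero]
    · rw [show m - k = 0 by omega, negBinomialPMFReal_of_lt p one_pos, zero_mul]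
  · obtain ⟨K, rfl⟩ := Nat.exists_eq_add_of_le hm
    rw [show (c + 1 + K).succ = c + (K + 1 + 1) by omega, sum_range_add, sum_range_succ]
    have hlow : ∀ k ∈ range c,
        negBinomialPMFReal 1 p (c + 1 + K - k) * negBinomialPMFReal c p k = 0 := fun k hk => by
      rw [negBinomialPMFReal_of_lt p (mem_range.1 hk), mul_zero]
    have hmid : ∀ i ∈ range (K + 1),
        negBinomialPMFReal 1 p (c + 1 + K - (c + i)) * negBinomialPMFReal c p (c + i)
          = c.multichoose i * ((1 - p) ^ K * p ^ (c + 1)) := fun i hi => by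
      obtain ⟨j, rfl⟩ : ∃ j, K = i + j := ⟨K - i, by have := mem_range.1 hi; omega⟩
      rw [show c + 1 + (i + j) - (c + i) = j + 1 by omega, negBinomialPMFReal_one_succ,
        negBinomialPMFReal_add]
      ring
    rw [sum_eq_zero hlow, sum_congr rfl hmid, ← sum_mul, ← Nat.cast_sum, Nat.sum_range_multichoose,
      show c + 1 + K - (c + (K + 1)) = 0 by omega, negBinomialPMFReal_of_lt p one_pos,
      negBinomialPMFReal_add p (c + 1) K, Nat.multichoose_eq, show c + 1 + K - 1 = K + c by omega,
      Nat.choose_symm_add]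
    ring

lemma sum_range_choose_succ_add_choose_mul (h N : ℕ) (hNh : N ≤ h) :
    ∑ i ∈ range (N + 1), ((h + 1).choose i : ℝ) * (1 - p) ^ (h + 1 - i) * p ^ i
      + (h.choose N : ℝ) * (1 - p) ^ (h - N) * p ^ (N + 1)
      = ∑ i ∈ range (N + 1), (h.choose i : ℝ) * (1 - p) ^ (h - i) * p ^ i := by
  induction N with
  | zero => simp; ring
  | succ N ih =>
    have hpow : (1 - p) ^ (h - N) = (1 - p) ^ (h - (N + 1)) * (1 - p) := by
      rw [← pow_succ, show h - (N + 1) + 1 = h - N by omega]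
    rw [sum_range_succ, sum_range_succ _ (N + 1), ← ih (by omega), Nat.choose_succ_succ',
      show h + 1 - (N + 1) = h - N by omega, hpow]
    push_cast
    ring

lemma sum_range_negBinomialPMFReal_add_sum_binomial {N h : ℕ} (hN : 1 ≤ N) (hNh : N ≤ h) :
    ∑ m ∈ range (h + 1), negBinomialPMFReal N p m
      + ∑ i ∈ range N, (h.choose i : ℝ) * (1 - p) ^ (h - i) * p ^ i = 1 := by
  obtain ⟨N, rfl⟩ : ∃ M, N = M + 1 := ⟨N - 1, by omega⟩
  induction h, hNh using Nat.le_induction with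
  | base =>
    have hbin := add_pow p (1 - p) (N + 1)
    rw [add_sub_cancel, one_pow, sum_range_succ] at hbin
    rw [sum_range_succ, sum_eq_zero fun m hm => negBinomialPMFReal_of_lt p (mem_range.1 hm),
      negBinomialPMFReal_self, zero_add]
    rw [sum_congr rfl fun i _ => show ((N + 1).choose i : ℝ) * (1 - p) ^ (N + 1 - i) * p ^ i
      = p ^ i * (1 - p) ^ (N + 1 - i) * (N + 1).choose i by ring]
    simp only [Nat.sub_self, Nat.choose_self, pow_zero, Nat.cast_one, mul_one] at hbin
    linear_combination -hbin
  | succ h hNh ih =>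
    have hlast : negBinomialPMFReal (N + 1) p (h + 1)
        = (h.choose N : ℝ) * (1 - p) ^ (h - N) * p ^ (N + 1) := by
      obtain ⟨k, rfl⟩ := Nat.exists_eq_add_of_le hNh
      rw [show N + 1 + k + 1 = N + 1 + (k + 1) by omega, negBinomialPMFReal_add, Nat.multichoose_eq,
        show N + 1 + (k + 1) - 1 = N + 1 + k by omega,
        Nat.choose_symm_of_eq_add (show N + 1 + k = k + 1 + N by omega),
        show N + 1 + k - N = k + 1 by omega]
    rw [sum_range_succ, hlast]
    linear_combination ih + sum_range_choose_succ_add_choose_mul p h N (by omega)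

lemma sum_range_mul_negBinomialPMFReal {N h : ℕ} (hNh : N < h) :
    ∑ m ∈ range h, (m : ℝ) * negBinomialPMFReal N p m
      = N * p ^ N + ∑ k ∈ Icc 1 (h - N - 1),
          ((N : ℝ) + k) * ((N + k - 1).choose k : ℝ) * (1 - p) ^ k * p ^ N := by
  obtain ⟨K, rfl⟩ : ∃ K, h = N + (K + 1) := ⟨h - N - 1, by omega⟩
  rw [sum_range_add, sum_eq_zero fun m hm => by rw [negBinomialPMFReal_of_lt p (mem_range.1 hm),
    mul_zero], zero_add, sum_range_succ', add_comm, show N + (K + 1) - N - 1 = K by omega,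
    ← Ico_add_one_right_eq_Icc, sum_Ico_eq_sum_range, add_tsub_cancel_right]
  simp only [negBinomialPMFReal_add, Nat.multichoose_eq]
  push_cast
  congr 1
  · simp
  · exact sum_congr rfl fun k _ => by ring_nf

end PMF

section Probability

variable {Ω : Type*} [MeasurableSpace Ω] {μ : Measure Ω}

lemma ProbabilityTheory.IndepFun.measureReal_add_eq_sum_antidiagonal [IsFiniteMeasure μ]
    {X Y : Ω → ℕ} (hXY : IndepFun X Y μ) (hX : Measurable X) (hY : Measurable Y) (m : ℕ) :
    μ.real {ω | X ω + Y ω = m}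
      = ∑ ij ∈ antidiagonal m, μ.real {ω | X ω = ij.1} * μ.real {ω | Y ω = ij.2} := by
  have hunion : {ω | X ω + Y ω = m} = ⋃ ij ∈ antidiagonal m, X ⁻¹' {ij.1} ∩ Y ⁻¹' {ij.2} := by
    ext ω; simp
  rw [hunion, measureReal_biUnion_finset]
  · refine sum_congr rfl fun ij _ => ?_
    simp only [measureReal_def, hXY.measure_inter_preimage_eq_mul _ _ (measurableSet_singleton _)
      (measurableSet_singleton _), ENNReal.toReal_mul]
    rfl
  · intro ij _ ij' _ hne
    refine Set.disjoint_left.2 fun ω h h' => hne ?_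
    simp_all [Prod.ext_iff]
  · exact fun ij _ => (hX (measurableSet_singleton _)).inter (hY (measurableSet_singleton _))

lemma measureReal_eq_negBinomialPMFReal_one {X : Ω → ℕ} {p : ℝ} (hp0 : 0 ≤ p) (hp1 : p ≤ 1)
    (hpos : ∀ᵐ ω ∂μ, 1 ≤ X ω)
    (hgeom : ∀ x : ℕ, 1 ≤ x → μ {ω | X ω = x} = ENNReal.ofReal ((1 - p) ^ (x - 1) * p))
    (n : ℕ) : μ.real {ω | X ω = n} = negBinomialPMFReal 1 p n := by
  rcases n with _ | n
  · rw [negBinomialPMFReal_of_lt p one_pos, measureReal_def, ENNReal.toReal_eq_zero_iff]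
    left
    exact measure_mono_null (fun ω hω => by simp_all) (ae_iff.1 hpos)
  · rw [negBinomialPMFReal_one_succ, measureReal_def, hgeom _ le_add_self, Nat.add_sub_cancel,
      ENNReal.toReal_ofReal (by have := sub_nonneg.2 hp1; positivity)]

variable [IsProbabilityMeasure μ]

theorem measureReal_sum_eq_negBinomialPMFReal {ι : Type*} {Θ : ι → Ω → ℕ} {p : ℝ}
    (hmeas : ∀ i, Measurable (Θ i)) (hindep : iIndepFun Θ μ)
    (hgeom : ∀ i n, μ.real {ω | Θ i ω = n} = negBinomialPMFReal 1 p n) (s : Finset ι) (m : ℕ) :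
    μ.real {ω | ∑ i ∈ s, Θ i ω = m} = negBinomialPMFReal s.card p m := by
  classical
  induction s using Finset.cons_induction generalizing m with
  | empty =>
    rcases eq_or_ne m 0 with rfl | hm
    · simp [negBinomialPMFReal_zero_left]
    · simp [negBinomialPMFReal_zero_left, hm, Ne.symm hm]
  | cons a s ha ih =>
    have hindep_a : IndepFun (Θ a) (fun ω => ∑ i ∈ s, Θ i ω) μ := by
      rw [← Finset.sum_fn]
      exact (hindep.indepFun_finsetSum_of_notMem hmeas ha).symm
    have hconv := hindep_a.measureReal_add_eq_sum_antidiagonal (hmeas a)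
      (Finset.measurable_sum s fun i _ => hmeas i) m
    simp only [sum_cons, card_cons, hconv, hgeom, ih, sum_antidiagonal_negBinomialPMFReal_one_mul]

lemma integral_min_natCast_eq {S : Ω → ℕ} (hS : Measurable S) (h : ℕ) :
    ∫ ω, min (S ω : ℝ) h ∂μ
      = ∑ m ∈ range h, m * μ.real {ω | S ω = m}
        + h * (1 - ∑ m ∈ range h, μ.real {ω | S ω = m}) := by
  have hfiber : ∀ m, MeasurableSet {ω | S ω = m} := fun m => hS (measurableSet_singleton m)
  have htail : MeasurableSet {ω | h ≤ S ω} := measurableSet_le measurable_const hS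
  have hpointwise : ∀ ω, min (S ω : ℝ) h
      = ∑ m ∈ range h, {ω | S ω = m}.indicator (fun _ => (m : ℝ)) ω
        + {ω | h ≤ S ω}.indicator (fun _ => (h : ℝ)) ω := fun ω => by
    simp only [Set.indicator_apply, Set.mem_ofPred_eq, sum_ite_eq, mem_range]
    rcases lt_or_ge (S ω) h with hlt | hge
    · simp [hlt, hlt.le, not_le.2 hlt]
    · simp [hge, not_lt.2 hge]
  have hlt : μ.real {ω | S ω < h} = ∑ m ∈ range h, μ.real {ω | S ω = m} := by
    rw [← measureReal_biUnion_finset _ fun m _ => hfiber m]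
    · congr 1; ext ω; simp
    · intro m _ m' _ hne
      exact Set.disjoint_left.2 fun ω h h' => hne (h.symm.trans h')
  have hge : μ.real {ω | h ≤ S ω} = 1 - μ.real {ω | S ω < h} := by
    rw [← probReal_compl_eq_one_sub (measurableSet_lt hS measurable_const)]
    congr 1; ext ω; simp
  simp_rw [hpointwise]
  rw [integral_add (integrable_finsetSum _ fun m _ => (integrable_const _).indicator (hfiber m))
      ((integrable_const _).indicator htail), integral_finsetSum _ fun m _ =>
      (integrable_const _).indicator (hfiber m), integral_indicator_const _ htail, hge, hlt]
  simp only [integral_indicator_const _ (hfiber _), smul_eq_mul, mul_comm]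

end Probability

/-- expected number of active slots in the symmetric-structure case,
right-hand side of the stability condition (30) for `h > N`. Let `Θ 1, …, Θ N` be i.i.d.
geometric with parameter `p ∈ (0,1]`, `h > N`, and `X = min(Σ_{i=1}^N Θ i, h)`. Then
`E[X] = N p^N + Σ_{k=1}^{h−N−1} (N+k) C(N+k−1, k) (1−p)^k p^N
+ h (Σ_{i=0}^{N−1} C(h,i) (1−p)^{h−i} pⁱ + C(h−1, h−N) (1−p)^{h−N} p^N)`. -/
theorem stmt15 {Ω : Type*} [MeasurableSpace Ω] (μ : Measure Ω) [IsProbabilityMeasure μ]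
    (N h : ℕ) (hN : 1 ≤ N) (hh : N < h) (p : ℝ) (hp : p ∈ Set.Ioc (0 : ℝ) 1)
    (Θ : Fin N → Ω → ℕ) (hmeas : ∀ i, Measurable (Θ i))
    (hindep : iIndepFun Θ μ)
    (hpos : ∀ i, ∀ᵐ ω ∂μ, 1 ≤ Θ i ω)
    (hgeom : ∀ i, ∀ x : ℕ, 1 ≤ x →
      μ {ω | Θ i ω = x} = ENNReal.ofReal ((1 - p) ^ (x - 1) * p)) :
    ∫ ω, (min (∑ i, Θ i ω) h : ℝ) ∂μ
      = (N : ℝ) * p ^ N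
        + ∑ k ∈ Finset.Icc 1 (h - N - 1),
            ((N : ℝ) + k) * ((N + k - 1).choose k : ℝ) * (1 - p) ^ k * p ^ N
        + (h : ℝ) * (∑ i ∈ Finset.range N, (h.choose i : ℝ) * (1 - p) ^ (h - i) * p ^ i
            + ((h - 1).choose (h - N) : ℝ) * (1 - p) ^ (h - N) * p ^ N) := by
  have hlaw (m : ℕ) : μ.real {ω | ∑ i, Θ i ω = m} = negBinomialPMFReal N p m := by
    simpa using measureReal_sum_eq_negBinomialPMFReal hmeas hindep
      (fun i => measureReal_eq_negBinomialPMFReal_one hp.1.le hp.2 (hpos i) (hgeom i)) univ m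
  have htotal := sum_range_negBinomialPMFReal_add_sum_binomial p hN hh.le
  have hlast : negBinomialPMFReal N p h
      = ((h - 1).choose (h - N) : ℝ) * (1 - p) ^ (h - N) * p ^ N := if_pos hh.le
  simp only [← Nat.cast_sum]
  rw [integral_min_natCast_eq (Finset.measurable_sum univ fun i _ => hmeas i)]
  simp only [hlaw]
  rw [sum_range_mul_negBinomialPMFReal p hh, ← hlast]
  rw [sum_range_succ] at htotal
  linear_combination -(h : ℝ) * htotal
end
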